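/- arXiv:1008.0515 — 9 statements merged into one kernel-verified Lean document; each statement's English description precedes it below -/
import Mathlib

section
/- Let G be a group and π a set of primes. If G is an extension of a π-local group N by a finite group whose order has all prime divisors in π, and G has unique q-th roots for all primes q ∉ π, then the map x ↦ x^q is surjective on G for every prime q ∉ π. -/
/-- If `G` has unique `q`-th roots for all primes `q ∉ π`, and `G` has a normal
subgroup `N` which is `π`-local (the `q`-th power map on `N` is bijective for all
primes `q ∉ π`) with `G/N` a finite group all of whose order's prime divisors lie
in `π`, then the `q`-th power map on `G` is surjective for every prime `q ∉ π`. -/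
theorem stmt0 {G : Type*} [Group G] (π : Set ℕ) (N : Subgroup G) [N.Normal]
    (hNloc : ∀ q : ℕ, q.Prime → q ∉ π → Function.Bijective (fun x : N => x ^ q))
    (hfin : Finite (G ⧸ N))
    (hπgrp : ∀ p : ℕ, p.Prime → p ∣ Nat.card (G ⧸ N) → p ∈ π)
    (huniq : ∀ q : ℕ, q.Prime → q ∉ π → Function.Injective (fun x : G => x ^ q)) :
    ∀ q : ℕ, q.Prime → q ∉ π → Function.Surjective (fun x : G => x ^ q) := by
  intro q hq hqπ g
  set n : ℕ := Nat.card (G ⧸ N) with hn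
  have hqn : ¬ q ∣ n := fun h => hqπ (hπgrp q hq h)
  have hcop : IsCoprime (q : ℤ) (n : ℤ) :=
    Int.isCoprime_iff_gcd_eq_one.mpr (by exact_mod_cast (hq.coprime_iff_not_dvd.mpr hqn))
  obtain ⟨u, v, huv⟩ := hcop
  -- g ^ n ∈ N
  have hgn : g ^ (n : ℤ) ∈ N := by
    rw [zpow_natCast]
    have := N.pow_index_mem g
    rwa [Subgroup.index] at this
  set c : N := ⟨g ^ (n : ℤ), hgn⟩ with hc
  set a : N := c ^ v with hadef
  have ha : (a : G) = g ^ ((n : ℤ) * v) := by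
    rw [hadef, hc]
    push_cast
    rw [← zpow_mul]
  obtain ⟨b, hb⟩ := (hNloc q hq hqπ).2 a
  have hbq : (b : G) ^ q = (a : G) := by
    rw [← hb]; push_cast; rfl
  -- b commutes with g
  have hconjmem : g * (b : G) * g⁻¹ ∈ N := Subgroup.Normal.conj_mem ‹N.Normal› _ b.2 g
  have hga : g * (a : G) * g⁻¹ = (a : G) := by
    rw [ha]
    have hcomm : g * g ^ ((n : ℤ) * v) = g ^ ((n : ℤ) * v) * g :=
      (Commute.refl g).zpow_right _
    rw [hcomm, mul_assoc, mul_inv_cancel, mul_one]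
  have hconj : (⟨g * (b : G) * g⁻¹, hconjmem⟩ : N) = b := by
    apply (hNloc q hq hqπ).1
    apply Subtype.ext
    show (g * (b : G) * g⁻¹) ^ q = (b : G) ^ q
    rw [conj_pow, hbq, hga]
  have hgb : Commute g (b : G) := by
    have := congrArg Subtype.val hconj
    simp only at this
    exact mul_inv_eq_iff_eq_mul.mp this
  refine ⟨g ^ u * (b : G), ?_⟩
  show (g ^ u * (b : G)) ^ q = g
  rw [mul_comm v] at huv
  rw [(hgb.zpow_left u).mul_pow, hbq, ha, ← zpow_natCast (g ^ u), ← zpow_mul, ← zpow_add,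
    huv, zpow_one]
end

section
/- Let G be a group in which the map x ↦ x^m is injective for every integer m all of whose prime divisors lie outside π (i.e., G is a U_π-group). Let A be a normal abelian subgroup of G that is maximal among normal abelian subgroups containing the derived subgroup G'. If x ∈ G and x^m ∈ A for some m ∈ π′ (all prime divisors of m outside π), then x ∈ A. In particular G/A has no nontrivial elements of order m for m ∈ π′. -/
/-!
If `x ^ m ∈ A` with `m ∈ π'`, then conjugation by any `a ∈ A` fixes `x ^ m`, so by uniqueness of
`m`-th roots it fixes `x`. Hence `⟨A, x⟩` is abelian; it contains `G'`, so it is normal, and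
maximality of `A` forces `x ∈ A`.
-/

theorem Commute.of_pow_right {G : Type*} [Group G] {m : ℕ}
    (hinj : Function.Injective (fun y : G => y ^ m)) {a x : G} (h : Commute a (x ^ m)) :
    Commute a x := by
  have hconj : (a * x * a⁻¹) ^ m = x ^ m := by rw [conj_pow, h.eq, mul_inv_cancel_right]
  exact mul_inv_eq_iff_eq_mul.mp (hinj hconj)

theorem Subgroup.isMulCommutative_sup_closure_singleton {G : Type*} [Group G] {A : Subgroup G}
    (hA : IsMulCommutative A) {x : G} (hx : ∀ a ∈ A, Commute a x) :
    IsMulCommutative (A ⊔ closure {x} : Subgroup G) := by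
  rw [← A.closure_eq, ← closure_union]
  refine isMulCommutative_closure ?_
  rintro s (hs | rfl) t (ht | rfl)
  · exact congrArg Subtype.val (hA.is_comm.comm ⟨s, hs⟩ ⟨t, ht⟩)
  · exact hx s hs
  · exact (hx t ht).symm
  · rfl

theorem stmt1_general {G : Type*} [Group G] (π : Set ℕ)
    (hU : ∀ m : ℕ, 0 < m → (∀ p : ℕ, p.Prime → p ∣ m → p ∉ π) →
      Function.Injective (fun x : G => x ^ m))
    (A : Subgroup G) (hA : IsMulCommutative A) (hGA : commutator G ≤ A)
    (hmax : ∀ B : Subgroup G, B.Normal → IsMulCommutative B → commutator G ≤ B →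
      A ≤ B → B = A)
    (x : G) (m : ℕ) (hm : 0 < m) (hmπ : ∀ p : ℕ, p.Prime → p ∣ m → p ∉ π)
    (hxm : x ^ m ∈ A) : x ∈ A := by
  have hcomm : ∀ a ∈ A, Commute a x := fun a ha =>
    .of_pow_right (hU m hm hmπ) (congrArg Subtype.val (hA.is_comm.comm ⟨a, ha⟩ ⟨x ^ m, hxm⟩))
  have hGB : commutator G ≤ A ⊔ Subgroup.closure {x} := hGA.trans le_sup_left
  have hB : A ⊔ Subgroup.closure {x} = A :=
    hmax _ (.of_commutator_le G hGB) (Subgroup.isMulCommutative_sup_closure_singleton hA hcomm)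
      hGB le_sup_left
  exact hB ▸ Subgroup.mem_sup_right (Subgroup.mem_closure_singleton_self x)

/-- Let `G` be a `U_π`-group and `A` a normal abelian subgroup of `G` containing the
derived subgroup, maximal among such. If `x ^ m ∈ A` for some `m` all of whose prime
divisors lie outside `π`, then `x ∈ A`. -/
theorem stmt1 {G : Type*} [Group G] (π : Set ℕ)
    (hU : ∀ m : ℕ, 0 < m → (∀ p : ℕ, p.Prime → p ∣ m → p ∉ π) →
      Function.Injective (fun x : G => x ^ m))
    (A : Subgroup G) [A.Normal] (hA : IsMulCommutative A) (hGA : commutator G ≤ A)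
    (hmax : ∀ B : Subgroup G, B.Normal → IsMulCommutative B → commutator G ≤ B →
      A ≤ B → B = A)
    (x : G) (m : ℕ) (hm : 0 < m) (hmπ : ∀ p : ℕ, p.Prime → p ∣ m → p ∉ π)
    (hxm : x ^ m ∈ A) : x ∈ A :=
  stmt1_general π hU A hA hGA hmax x m hm hmπ hxm
end

section
/- Let G be a U_π-group (unique m-th roots property: x^m = y^m ⟹ x = y for m ∈ π′) which is metabelian with maximal abelian normal subgroup A ⊇ G', and suppose G/A is π′-torsion-free. Let N be a normal subgroup with A ≤ N ⊴ G and Z = Z(N) ≠ 1. Then the quotient G/Z is again a U_π-group. -/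
/-! Since `G' ≤ A` and `A` is maximal, `A` is self-centralizing, so `z = x⁻ᵐyᵐ ∈ Z` lies in `A`;
as `G/A` is abelian, `(x⁻¹y)ᵐ ≡ z (mod A)`, hence `a = x⁻¹y ∈ A` by `π'`-torsion-freeness of `G/A`.
For `b ∈ A`, the element `u⁻ᵏ(ub)ᵏ` depends only on how `u` acts on `A` by conjugation, and this
action does not change when `x` is replaced by its conjugate `xⁿ ∈ xA`. Conjugating
`z = x⁻ᵐ(xa)ᵐ` by `n ∈ N` therefore yields `(xaⁿ)ᵐ = (xa)ᵐ`, so `aⁿ = a` by uniqueness of roots,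
i.e. `a ∈ Z(N)`. -/

section

open Subgroup
open scoped commutatorElement

variable {G : Type*} [Group G] {A : Subgroup G}

theorem centralizer_le_of_maximal [IsMulCommutative A] (hGA : commutator G ≤ A)
    (hmax : ∀ B : Subgroup G, B.Normal → IsMulCommutative B → commutator G ≤ B →
      A ≤ B → B = A) :
    centralizer (A : Set G) ≤ A := by
  intro c hc
  have hcomm : ∀ x ∈ insert c (A : Set G), ∀ y ∈ insert c (A : Set G), x * y = y * x := by
    rintro x (rfl | hx) y (rfl | hy)
    · rfl
    · exact (hc y hy).symm
    · exact hc x hx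
    · exact setLike_mul_comm hx hy
  have hAB : A ≤ closure (insert c A) := fun a ha => subset_closure (Set.mem_insert_of_mem c ha)
  have hB := hmax _ (.of_commutator_le G (hGA.trans hAB)) (isMulCommutative_closure hcomm)
    (hGA.trans hAB) hAB
  exact hB ▸ subset_closure (Set.mem_insert c _)

theorem inv_mul_pow_mem_iff_of_commutator_le [A.Normal] (hGA : commutator G ≤ A) (x y : G)
    (m : ℕ) : (x⁻¹ * y) ^ m ∈ A ↔ (x ^ m)⁻¹ * y ^ m ∈ A := by
  have : IsMulCommutative (G ⧸ A) := Normal.quotient_commutative_iff_commutator_le.mpr hGA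
  simp only [← QuotientGroup.eq_one_iff, QuotientGroup.mk_mul, QuotientGroup.mk_pow,
    QuotientGroup.mk_inv, (Commute.mul_pow (mul_comm' _ _) m), inv_pow]

theorem inv_pow_mul_mul_pow_mem [A.Normal] (u : G) {b : G} (hb : b ∈ A) (k : ℕ) :
    (u ^ k)⁻¹ * (u * b) ^ k ∈ A := by
  rw [← QuotientGroup.eq, QuotientGroup.mk_pow, QuotientGroup.mk_pow,
    QuotientGroup.eq.mpr (by simpa using hb : u⁻¹ * (u * b) ∈ A)]

theorem inv_pow_mul_mul_pow_eq_of_conj_eq [A.Normal] {u v : G}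
    (huv : ∀ c ∈ A, u⁻¹ * c * u = v⁻¹ * c * v) {b : G} (hb : b ∈ A) (k : ℕ) :
    (u ^ k)⁻¹ * (u * b) ^ k = (v ^ k)⁻¹ * (v * b) ^ k := by
  induction k with
  | zero => simp
  | succ k ih =>
    have step : ∀ w : G, (w ^ (k + 1))⁻¹ * (w * b) ^ (k + 1)
        = w⁻¹ * ((w ^ k)⁻¹ * (w * b) ^ k) * w * b := fun w => by
      rw [pow_succ, pow_succ]; group
    rw [step, step, ← ih, huv _ (inv_pow_mul_mul_pow_mem u hb k)]

theorem conj_mul_eq_conj_of_mem [A.Normal] [IsMulCommutative A] (u : G) {c d : G} (hc : c ∈ A)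
    (hd : d ∈ A) : (u * d)⁻¹ * c * (u * d) = u⁻¹ * c * u := by
  have hc' : u⁻¹ * c * u ∈ A := by simpa using ‹A.Normal›.conj_mem c hc u⁻¹
  calc (u * d)⁻¹ * c * (u * d) = d⁻¹ * ((u⁻¹ * c * u) * d) := by group
    _ = d⁻¹ * (d * (u⁻¹ * c * u)) := by rw [setLike_mul_comm hc' hd]
    _ = u⁻¹ * c * u := by group

theorem commute_of_commute_inv_pow_mul_mul_pow [A.Normal] [IsMulCommutative A]
    (hGA : commutator G ≤ A) {m : ℕ} (hinj : Function.Injective (fun x : G => x ^ m))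
    {x a g : G} (ha : a ∈ A) (hg : Commute g ((x ^ m)⁻¹ * (x * a) ^ m)) : Commute g a := by
  have ha' : g⁻¹ * a * g ∈ A := ‹A.Normal›.conj_mem' a ha g
  have hd : x⁻¹ * (g⁻¹ * x * g) ∈ A := by
    have : x⁻¹ * (g⁻¹ * x * g) = ⁅x⁻¹, g⁻¹⁆ := by group
    exact this ▸ hGA (commutator_mem_commutator (mem_top _) (mem_top _))
  have hconj : ∀ c ∈ A, x⁻¹ * c * x = (g⁻¹ * x * g)⁻¹ * c * (g⁻¹ * x * g) := fun c hc => by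
    rw [← mul_inv_cancel_left x (g⁻¹ * x * g), conj_mul_eq_conj_of_mem x hc hd]
  have hconj_eq : ∀ w : G, g⁻¹ * w * g = MulAut.conj g⁻¹ w := fun w => by simp
  have key : (x ^ m)⁻¹ * (x * (g⁻¹ * a * g)) ^ m = g⁻¹ * ((x ^ m)⁻¹ * (x * a) ^ m) * g := by
    rw [inv_pow_mul_mul_pow_eq_of_conj_eq hconj ha' m,
      show g⁻¹ * x * g * (g⁻¹ * a * g) = g⁻¹ * (x * a) * g by group,
      hconj_eq, hconj_eq, hconj_eq, ← map_pow, ← map_pow, ← map_inv, ← map_mul]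
  have hpow : (x * (g⁻¹ * a * g)) ^ m = (x * a) ^ m := by
    refine mul_left_cancel (key.trans ?_)
    rw [mul_assoc, ← hg.eq, inv_mul_cancel_left]
  have hfix : g⁻¹ * a * g = a := mul_left_cancel (hinj hpow)
  calc g * a = g * (g⁻¹ * a * g) := by rw [hfix]
    _ = a * g := by group

end

theorem stmt4_general {G : Type*} [Group G] (π : Set ℕ)
    (hU : ∀ m : ℕ, 0 < m → (∀ p : ℕ, p.Prime → p ∣ m → p ∉ π) →
      Function.Injective (fun x : G => x ^ m))
    (A : Subgroup G) [A.Normal] (hA : IsMulCommutative A) (hGA : commutator G ≤ A)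
    (hmax : ∀ B : Subgroup G, B.Normal → IsMulCommutative B → commutator G ≤ B →
      A ≤ B → B = A)
    (hGAtf : ∀ x : G, ∀ m : ℕ, 0 < m → (∀ p : ℕ, p.Prime → p ∣ m → p ∉ π) →
      x ^ m ∈ A → x ∈ A)
    (N : Subgroup G) (hAN : A ≤ N)
    (Z : Subgroup G) (hZ : Z = N ⊓ Subgroup.centralizer (N : Set G))
    (x y : G) (m : ℕ) (hm : 0 < m) (hmπ : ∀ p : ℕ, p.Prime → p ∣ m → p ∉ π)
    (hxy : (x ^ m)⁻¹ * y ^ m ∈ Z) : x⁻¹ * y ∈ Z := by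
  subst hZ
  obtain ⟨-, hz⟩ := hxy
  have hzA : (x ^ m)⁻¹ * y ^ m ∈ A := centralizer_le_of_maximal hGA hmax <|
    Subgroup.centralizer_le (SetLike.coe_subset_coe.mpr hAN) hz
  have ha : x⁻¹ * y ∈ A :=
    hGAtf _ m hm hmπ ((inv_mul_pow_mem_iff_of_commutator_le hGA x y m).mpr hzA)
  refine ⟨hAN ha, Subgroup.mem_centralizer_iff.mpr fun n hn => ?_⟩
  refine (commute_of_commute_inv_pow_mul_mul_pow hGA (hU m hm hmπ) (x := x) ha ?_).eq
  rw [mul_inv_cancel_left]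
  exact Subgroup.mem_centralizer_iff.mp hz n hn

/-- Let `G` be a metabelian `U_π`-group with `A` maximal abelian normal containing `G'`,
`G/A` being `π'`-torsion-free. If `A ≤ N ⊴ G` and `Z = Z(N)` is nontrivial, then `G/Z` is
again a `U_π`-group: `x^m Z = y^m Z` with `m ∈ π'` implies `x Z = y Z`. -/
theorem stmt4 {G : Type*} [Group G] (π : Set ℕ)
    (hU : ∀ m : ℕ, 0 < m → (∀ p : ℕ, p.Prime → p ∣ m → p ∉ π) →
      Function.Injective (fun x : G => x ^ m))
    (A : Subgroup G) [A.Normal] (hA : IsMulCommutative A) (hGA : commutator G ≤ A)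
    (hmax : ∀ B : Subgroup G, B.Normal → IsMulCommutative B → commutator G ≤ B →
      A ≤ B → B = A)
    (hGAtf : ∀ x : G, ∀ m : ℕ, 0 < m → (∀ p : ℕ, p.Prime → p ∣ m → p ∉ π) →
      x ^ m ∈ A → x ∈ A)
    (N : Subgroup G) [N.Normal] (hAN : A ≤ N)
    (Z : Subgroup G) (hZ : Z = N ⊓ Subgroup.centralizer (N : Set G))
    (hZne : Z ≠ ⊥)
    (x y : G) (m : ℕ) (hm : 0 < m) (hmπ : ∀ p : ℕ, p.Prime → p ∣ m → p ∉ π)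
    (hxy : (x ^ m)⁻¹ * y ^ m ∈ Z) : x⁻¹ * y ∈ Z :=
  stmt4_general π hU A hA hGA hmax hGAtf N hAN Z hZ x y m hm hmπ hxy
end

section
/- Let H be a group, A_π an abelian normal subgroup of H with H/A_π abelian, and let x ∈ H with C_{A_π}(x) = 1 and x ∉ A_π. Assume that for all nontrivial y ∈ H \ A_π, C_H(y) ∩ A_π = C_{A_π}(y). If C_{A_π}(y) = 1 for all y ∉ A_π, then C_H(x) is malnormal in H. -/
open scoped commutatorElement

/-- Let `Aπ` be an abelian normal subgroup of `H` with `H/Aπ` abelian, and suppose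
`C_{Aπ}(y) = 1` for every `y ∉ Aπ`. Then for `x ∉ Aπ` the centralizer `C_H(x)` is
malnormal in `H`. -/
theorem stmt8 {H : Type*} [Group H] (Aπ : Subgroup H) [Aπ.Normal]
    (hA : IsMulCommutative Aπ) (hHab : commutator H ≤ Aπ)
    (hCA : ∀ y : H, y ∉ Aπ → ∀ a ∈ Aπ, a * y = y * a → a = 1)
    (x : H) (hx : x ∉ Aπ) (z : H)
    (hint : ∃ y : H, y ≠ 1 ∧ y ∈ Subgroup.centralizer {x} ∧
      z * y * z⁻¹ ∈ Subgroup.centralizer {x}) :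
    z ∈ Subgroup.centralizer {x} := by
  obtain ⟨y, hy1, hyc, hyzc⟩ := hint
  rw [Subgroup.mem_centralizer_iff] at hyc hyzc ⊢
  have hxy : x * y = y * x := hyc x rfl
  have hxzy : x * (z * y * z⁻¹) = (z * y * z⁻¹) * x := hyzc x rfl
  -- y ∉ Aπ
  have hyA : y ∉ Aπ := by
    intro hmem
    exact hy1 (hCA x hx y hmem (by rw [hxy]))
  -- c = x⁻¹ z⁻¹ x z ∈ Aπ
  set c := x⁻¹ * z⁻¹ * x * z with hc
  have hcA : c ∈ Aπ := by
    have : ⁅x⁻¹, z⁻¹⁆ ∈ commutator H := by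
      rw [commutator_def]
      exact Subgroup.commutator_mem_commutator (Subgroup.mem_top _) (Subgroup.mem_top _)
    have hceq : c = ⁅x⁻¹, z⁻¹⁆ := by
      simp [hc, commutatorElement_def, mul_assoc]
    exact hceq ▸ hHab this
  -- c commutes with y
  have hcy : c * y = y * c := by
    have h1 : y * (z⁻¹ * x * z) = (z⁻¹ * x * z) * y := by
      calc y * (z⁻¹ * x * z) = z⁻¹ * (z * y * z⁻¹ * x) * z := by group
        _ = z⁻¹ * (x * (z * y * z⁻¹)) * z := by rw [← hxzy]
        _ = z⁻¹ * x * z * y := by group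
    have h2 : y * x⁻¹ = x⁻¹ * y := by
      calc y * x⁻¹ = x⁻¹ * (x * y) * x⁻¹ := by group
        _ = x⁻¹ * (y * x) * x⁻¹ := by rw [hxy]
        _ = x⁻¹ * y := by group
    calc c * y = x⁻¹ * ((z⁻¹ * x * z) * y) := by rw [hc]; group
      _ = x⁻¹ * (y * (z⁻¹ * x * z)) := by rw [h1]
      _ = (x⁻¹ * y) * (z⁻¹ * x * z) := by group
      _ = (y * x⁻¹) * (z⁻¹ * x * z) := by rw [h2]
      _ = y * c := by rw [hc]; group
  have hc1 : c = 1 := hCA y hyA c hcA hcy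
  have hcx : x⁻¹ * z⁻¹ * x * z = 1 := hc1
  have hconj : z⁻¹ * x * z = x := by
    calc z⁻¹ * x * z = x * (x⁻¹ * z⁻¹ * x * z) := by group
      _ = x := by rw [hcx, mul_one]
  have hz : x * z = z * x := by
    calc x * z = z * (z⁻¹ * x * z) := by group
      _ = z * x := by rw [hconj]
  intro g hg
  rw [Set.mem_singleton_iff] at hg
  rw [hg]
  exact hz
end

section
/- Let G be a finitely generated group that is not virtually nilpotent. Then G has a quotient G/N that is just non-virtually-nilpotent (JNVN): G/N is not virtually nilpotent, but every proper quotient of G/N is virtually nilpotent. -/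
/-!
Zorn's lemma, applied to the normal subgroups `N` with `G ⧸ N` not virtually nilpotent, yields a
maximal one, and that `N` is the required kernel. Chains have upper bounds because virtual
nilpotency of `G ⧸ N` is witnessed by finitely many elements of `N`: it means `γₙ(M) ≤ N` for some
finite-index `M ≤ G`; such an `M` is finitely generated (Schreier), so `γₙ(M)` is the normal
closure in `M` of a finite set `F`, and every normal `P ⊇ F` already has `G ⧸ P` virtually
nilpotent. This `F` lies in a single member of a chain whose union is `N`.
-/

/-- A group is virtually nilpotent if it has a nilpotent subgroup of finite index. -/
def IsVirtuallyNilpotent (G : Type*) [Group G] : Prop :=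
  ∃ H : Subgroup G, H.FiniteIndex ∧ Group.IsNilpotent H

open Subgroup
open scoped commutatorElement

section

variable {G : Type*} [Group G]

theorem isVirtuallyNilpotent_iff_exists_lowerCentralSeries_eq_bot :
    IsVirtuallyNilpotent G ↔
      ∃ M : Subgroup G, M.FiniteIndex ∧ ∃ n, M.lowerCentralSeries n = ⊥ := by
  simp only [IsVirtuallyNilpotent, isNilpotent_iff_lowerCentralSeries]

theorem isVirtuallyNilpotent_quotient_iff (N : Subgroup G) [N.Normal] :
    IsVirtuallyNilpotent (G ⧸ N) ↔
      ∃ M : Subgroup G, M.FiniteIndex ∧ ∃ n, M.lowerCentralSeries n ≤ N := by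
  have hπ : Function.Surjective (QuotientGroup.mk' N) := QuotientGroup.mk'_surjective N
  rw [isVirtuallyNilpotent_iff_exists_lowerCentralSeries_eq_bot]
  constructor
  · rintro ⟨H, hH, n, hn⟩
    refine ⟨H.comap (QuotientGroup.mk' N), ⟨?_⟩, n, ?_⟩
    · rw [index_comap_of_surjective H hπ]
      exact hH.index_ne_zero
    · refine ((Subgroup.map_eq_bot_iff _).mp ?_).trans (QuotientGroup.ker_mk' N).le
      rw [map_lowerCentralSeries, map_comap_eq_self_of_surjective hπ, hn]
  · rintro ⟨M, hM, n, hn⟩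
    refine ⟨M.map (QuotientGroup.mk' N), ⟨?_⟩, n, ?_⟩
    · exact ne_zero_of_dvd_ne_zero hM.index_ne_zero (index_map_dvd M hπ)
    · rw [← map_lowerCentralSeries, Subgroup.map_eq_bot_iff, QuotientGroup.ker_mk']
      exact hn

theorem not_isVirtuallyNilpotent_quotient_bot (hG : ¬ IsVirtuallyNilpotent G) :
    ¬ IsVirtuallyNilpotent (G ⧸ (⊥ : Subgroup G)) := by
  simpa only [isVirtuallyNilpotent_quotient_iff, le_bot_iff,
    ← isVirtuallyNilpotent_iff_exists_lowerCentralSeries_eq_bot] using hG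

namespace Subgroup

theorem commutator_normalClosure_top {S : Set G} (hS : closure S = ⊤) (T : Set G) :
    ⁅normalClosure T, ⊤⁆ = normalClosure (Set.image2 (fun t s => ⁅t, s⁆) T S) := by
  set R := normalClosure (Set.image2 (fun t s => ⁅t, s⁆) T S)
  refine le_antisymm ?_ (normalClosure_le_normal ?_)
  · set π := QuotientGroup.mk' R
    have hπS : closure (π '' S) = ⊤ := by
      rw [← MonoidHom.map_closure, hS, map_top_of_surjective π (QuotientGroup.mk'_surjective R)]
    -- modulo `R` each `t ∈ T` commutes with the generators `S`, hence is central
    have hT : T ⊆ upperCentralSeriesStep R := by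
      intro t ht
      rw [upperCentralSeriesStep_eq_comap_center, SetLike.mem_coe, mem_comap,
        center_eq_iInf hπS]
      simp only [mem_iInf]
      rintro _ ⟨s, hs, rfl⟩
      have hts : π ⁅t, s⁆ = 1 :=
        (QuotientGroup.eq_one_iff _).mpr (subset_normalClosure ⟨t, ht, s, hs, rfl⟩)
      rw [map_commutatorElement, commutatorElement_eq_one_iff_commute] at hts
      exact mem_centralizer_singleton_iff.mpr hts.eq
    have : (upperCentralSeriesStep R).Normal := by
      rw [upperCentralSeriesStep_eq_comap_center]
      exact normal_comap π
    rw [commutator_le]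
    exact fun x hx y _ => normalClosure_le_normal hT hx y
  · rintro _ ⟨t, ht, s, -, rfl⟩
    exact commutator_mem_commutator (subset_normalClosure ht) (mem_top s)

theorem exists_finite_lowerCentralSeries_eq_normalClosure [Group.FG G] (n : ℕ) :
    ∃ T : Set G, T.Finite ∧ (⊤ : Subgroup G).lowerCentralSeries n = normalClosure T := by
  obtain ⟨S, hS, hSfin⟩ := Group.fg_iff.mp ‹Group.FG G›
  induction n with
  | zero =>
    refine ⟨S, hSfin, ?_⟩
    rw [Subgroup.lowerCentralSeries_zero, eq_comm, eq_top_iff, ← hS]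
    exact closure_le_normalClosure
  | succ n ih =>
    obtain ⟨T, hTfin, hT⟩ := ih
    refine ⟨_, hTfin.image2 (fun t s => ⁅t, s⁆) hSfin, ?_⟩
    rw [Subgroup.lowerCentralSeries_succ, hT, commutator_normalClosure_top hS]

theorem exists_finite_lowerCentralSeries_le_normalClosure (M : Subgroup G) [Group.FG M]
    (n : ℕ) :
    ∃ F : Set G, F.Finite ∧ F ⊆ M.lowerCentralSeries n ∧
      M.lowerCentralSeries n ≤ normalClosure F := by
  obtain ⟨T, hTfin, hT⟩ := exists_finite_lowerCentralSeries_eq_normalClosure (G := M) n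
  rw [← top_subtype_lowerCentralSeries, hT]
  exact ⟨M.subtype '' T, hTfin.image _, Set.image_mono subset_normalClosure,
    map_normalClosure_le T M.subtype⟩

theorem exists_mem_subset_of_finite_subset_sSup {c : Set (Subgroup G)} (hne : c.Nonempty)
    (hdir : DirectedOn (· ≤ ·) c) {F : Set G} (hFfin : F.Finite) (hF : F ⊆ (sSup c : Subgroup G)) :
    ∃ N ∈ c, F ⊆ N := by
  have hF' : (hFfin.toFinset : Set G) ⊆ ⋃ N ∈ c, (N : Set G) := by
    intro x hx
    simpa [← mem_sSup_of_directedOn hne hdir] using hF (hFfin.mem_toFinset.mp hx)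
  simpa using DirectedOn.exists_mem_subset_of_finset_subset_biUnion hne hdir hF'

end Subgroup

theorem exists_finite_forall_isVirtuallyNilpotent_quotient [Group.FG G] (N : Subgroup G)
    [N.Normal] (hN : IsVirtuallyNilpotent (G ⧸ N)) :
    ∃ F : Set G, F.Finite ∧ F ⊆ N ∧
      ∀ (P : Subgroup G) [P.Normal], F ⊆ P → IsVirtuallyNilpotent (G ⧸ P) := by
  obtain ⟨M, hM, n, hn⟩ := (isVirtuallyNilpotent_quotient_iff N).mp hN
  obtain ⟨F, hFfin, hFM, hMF⟩ := exists_finite_lowerCentralSeries_le_normalClosure M n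
  refine ⟨F, hFfin, hFM.trans hn, fun P _ hFP => ?_⟩
  exact (isVirtuallyNilpotent_quotient_iff P).mpr
    ⟨M, hM, n, hMF.trans (normalClosure_le_normal hFP)⟩

theorem not_isVirtuallyNilpotent_quotient_sSup [Group.FG G] {c : Set (Subgroup G)}
    (hne : c.Nonempty) (hdir : DirectedOn (· ≤ ·) c) [(sSup c).Normal]
    (hc : ∀ N ∈ c, ∃ _ : N.Normal, ¬ IsVirtuallyNilpotent (G ⧸ N)) :
    ¬ IsVirtuallyNilpotent (G ⧸ sSup c) := by
  intro h
  obtain ⟨F, hFfin, hFc, hF⟩ := exists_finite_forall_isVirtuallyNilpotent_quotient (sSup c) h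
  obtain ⟨N, hNc, hFN⟩ := exists_mem_subset_of_finite_subset_sSup hne hdir hFfin hFc
  obtain ⟨_, hN⟩ := hc N hNc
  exact hN (hF N hFN)

end

/-- A finitely generated group which is not virtually nilpotent has a just
non-virtually-nilpotent (JNVN) quotient: a quotient `G/N` which is not virtually
nilpotent, but all of whose proper quotients are virtually nilpotent. -/
theorem stmt10 {G : Type*} [Group G] (hfg : Group.FG G)
    (hG : ¬ IsVirtuallyNilpotent G) :
    ∃ (N : Subgroup G) (hN : N.Normal),
      ¬ @IsVirtuallyNilpotent (G ⧸ N) (@QuotientGroup.Quotient.group _ _ N hN) ∧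
      ∀ (M : Subgroup G) (hM : M.Normal), N ≤ M → N ≠ M →
        @IsVirtuallyNilpotent (G ⧸ M) (@QuotientGroup.Quotient.group _ _ M hM) := by
  obtain ⟨N, -, hNmax⟩ := zorn_le_nonempty₀
    {N : Subgroup G | ∃ _ : N.Normal, ¬ IsVirtuallyNilpotent (G ⧸ N)}
    (fun c hc hchain _ hN =>
      have := sSup_normal c fun N hN => (hc hN).fst
      ⟨sSup c, ⟨this, not_isVirtuallyNilpotent_quotient_sSup ⟨_, hN⟩ hchain.directedOn hc⟩,
        fun _ => le_sSup⟩)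
    ⊥ ⟨inferInstance, not_isVirtuallyNilpotent_quotient_bot hG⟩
  obtain ⟨hN, hNnot⟩ := hNmax.prop
  refine ⟨N, hN, hNnot, fun M hM hNM hne => ?_⟩
  by_contra hMnot
  exact hne (le_antisymm hNM (hNmax.2 ⟨hM, hMnot⟩ hNM))
end

section
/- Let G be a finitely generated metabelian group. Then G satisfies the maximal condition on normal subgroups (max-n): every nonempty set of normal subgroups of G has a maximal element; equivalently, every ascending chain of normal subgroups of G stabilizes. -/
/-!
Let `A = G'`, an abelian normal subgroup, and `Q = G ⧸ A`, a finitely generated abelian group.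
Conjugation makes `A` a module over the group ring `ℤ[Q]`, which is Noetherian by the Hilbert
basis theorem; the module is generated by the commutators of a finite generating set of `G`, so
its submodules satisfy the ascending chain condition, as do the subgroups of `Q`. A normal
subgroup `N` determines the submodule `N ⊓ A` and the subgroup `NA/A` of `Q`, and by Dedekind's
modular law two nested normal subgroups with the same two invariants coincide.
-/

open Subgroup
open scoped IsMulCommutative MonoidAlgebra commutatorElement

theorem Subrepresentation.wellFoundedGT_of_isNoetherian {k G V : Type*} [CommRing k] [Monoid G]
    [AddCommGroup V] [Module k V] (ρ : Representation k G V) [IsNoetherian k[G] ρ.asModule] :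
    WellFoundedGT (Subrepresentation ρ) :=
  StrictMono.wellFoundedGT (f := Subrepresentation.asSubmodule) fun _ _ h => h

namespace Subgroup

section

variable {G : Type*} [Group G]

theorem eq_of_le_of_inf_le_of_sup_le {H K N : Subgroup G} [N.Normal] (hHK : H ≤ K)
    (hinf : K ⊓ N ≤ H ⊓ N) (hsup : K ⊔ N ≤ H ⊔ N) : H = K := by
  refine le_antisymm hHK fun x hxK => ?_
  have hx : x ∈ (↑(H ⊔ N) : Set G) := hsup (mem_sup_left hxK)
  rw [mul_normal] at hx
  obtain ⟨h, hh, n, hn, rfl⟩ := hx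
  have hnK : n ∈ K := by simpa using K.mul_mem (K.inv_mem (hHK hh)) hxK
  exact H.mul_mem hh (hinf ⟨hnK, hn⟩).1

theorem commutator_le_normalClosure_image2 {T : Set G} (hT : closure T = ⊤) :
    _root_.commutator G ≤ normalClosure (Set.image2 (⁅·, ·⁆) T T) := by
  set K := normalClosure (Set.image2 (⁅·, ·⁆) T T)
  rw [← Normal.quotient_commutative_iff_commutator_le]
  have hgen : closure (QuotientGroup.mk' K '' T) = ⊤ := by
    rw [← MonoidHom.map_closure, hT, map_top_of_surjective _ (QuotientGroup.mk'_surjective K)]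
  have hcomm : ∀ x ∈ QuotientGroup.mk' K '' T, ∀ y ∈ QuotientGroup.mk' K '' T,
      x * y = y * x := by
    rintro _ ⟨a, ha, rfl⟩ _ ⟨b, hb, rfl⟩
    rw [← commutatorElement_eq_one_iff_mul_comm, ← map_commutatorElement,
      QuotientGroup.mk'_apply, QuotientGroup.eq_one_iff]
    exact subset_normalClosure (Set.mem_image2_of_mem ha hb)
  have := isMulCommutative_closure hcomm
  rw [hgen] at this
  exact ⟨⟨fun x y => congrArg Subtype.val
    (mul_comm' (⟨x, mem_top x⟩ : (⊤ : Subgroup _)) ⟨y, mem_top y⟩)⟩⟩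

theorem wellFoundedGT_of_fg (Q : Type*) [Group Q] [IsMulCommutative Q] [Group.FG Q] :
    WellFoundedGT (Subgroup Q) := by
  have : Module.Finite ℤ (Additive Q) := Module.Finite.iff_addGroup_fg.2 inferInstance
  exact (toAddSubgroup.trans AddSubgroup.toIntSubmodule).strictMono.wellFoundedGT

end

section

variable {G : Type*} [Group G] (A : Subgroup G) [A.Normal] [IsMulCommutative A]

/-- Being abelian, `A` acts trivially on itself by conjugation, which therefore factors
through `G ⧸ A`. -/
def conjRep : Representation ℤ (G ⧸ A) (Additive A) :=
  QuotientGroup.lift A ((Representation.ofMulDistribMulAction (ConjAct G) A).comp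
    ConjAct.toConjAct.toMonoidHom) fun a ha => by
      ext x
      change a * x.toMul * a⁻¹ = x.toMul
      rw [setLike_mul_comm ha x.toMul.2, mul_inv_cancel_right]

def subrepOfNormal (N : Subgroup G) [N.Normal] : Subrepresentation A.conjRep where
  toSubmodule := AddSubgroup.toIntSubmodule (N.subgroupOf A).toAddSubgroup
  apply_mem_toSubmodule q := by
    induction q using QuotientGroup.induction_on with
    | H g => exact fun a ha => ‹N.Normal›.conj_mem _ ha g

variable {A} in
@[simp]
lemma mem_subrepOfNormal {N : Subgroup G} [N.Normal] {a : Additive A} :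
    a ∈ A.subrepOfNormal N ↔ (a.toMul : G) ∈ N := Iff.rfl

lemma subrepOfNormal_mono {N₁ N₂ : Subgroup G} [N₁.Normal] [N₂.Normal] (h : N₁ ≤ N₂) :
    A.subrepOfNormal N₁ ≤ A.subrepOfNormal N₂ := fun _ ha => h ha

lemma inf_le_inf_of_subrepOfNormal_le {N₁ N₂ : Subgroup G} [N₁.Normal] [N₂.Normal]
    (h : A.subrepOfNormal N₂ ≤ A.subrepOfNormal N₁) : N₂ ⊓ A ≤ N₁ ⊓ A :=
  fun x ⟨hx₂, hxA⟩ => ⟨(mem_subrepOfNormal (a := Additive.ofMul ⟨x, hxA⟩)).1 (h hx₂), hxA⟩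

noncomputable def ofConjRepSubmodule (P : Submodule ℤ[G ⧸ A] A.conjRep.asModule) : Subgroup G :=
  (AddSubgroup.toSubgroup'
    (P.toAddSubgroup.comap A.conjRep.asModuleEquiv.symm.toAddMonoidHom)).map A.subtype

variable {A} in
lemma mem_ofConjRepSubmodule {P : Submodule ℤ[G ⧸ A] A.conjRep.asModule} {g : G} :
    g ∈ A.ofConjRepSubmodule P ↔
      ∃ a : A, A.conjRep.asModuleEquiv.symm (Additive.ofMul a) ∈ P ∧ (a : G) = g := by
  simp [ofConjRepSubmodule]

instance (P : Submodule ℤ[G ⧸ A] A.conjRep.asModule) : (A.ofConjRepSubmodule P).Normal where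
  conj_mem n hn g := by
    obtain ⟨a, ha, rfl⟩ := mem_ofConjRepSubmodule.1 hn
    refine mem_ofConjRepSubmodule.2 ⟨MulAut.conjNormal g a, ?_, rfl⟩
    have := A.conjRep.asModuleEquiv_symm_map_rho (g : G ⧸ A) (Additive.ofMul a)
    exact this ▸ P.smul_mem _ ha

lemma finite_asModule_conjRep {s : Set G} (hs : s.Finite) (hsA : s ⊆ A)
    (hA : A ≤ normalClosure s) : Module.Finite ℤ[G ⧸ A] A.conjRep.asModule := by
  set gens :=
    (fun a : A => A.conjRep.asModuleEquiv.symm (Additive.ofMul a)) '' (A.subtype ⁻¹' s)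
  refine ⟨Submodule.fg_def.2 ⟨gens, (hs.preimage A.subtype_injective.injOn).image _, ?_⟩⟩
  have hle : A ≤ A.ofConjRepSubmodule (Submodule.span _ gens) :=
    hA.trans <| normalClosure_le_normal fun g hg =>
      mem_ofConjRepSubmodule.2 ⟨⟨g, hsA hg⟩, Submodule.subset_span ⟨_, hg, rfl⟩, rfl⟩
  refine Submodule.eq_top_iff'.2 fun x => ?_
  obtain ⟨a, ha, hax⟩ := mem_ofConjRepSubmodule.1 (hle (A.conjRep.asModuleEquiv x).toMul.2)
  rwa [Subtype.ext hax, ofMul_toMul, LinearEquiv.symm_apply_apply] at ha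

theorem wellFoundedGT_normal_of_isNoetherian_conjRep
    [IsNoetherian ℤ[G ⧸ A] A.conjRep.asModule]
    [WellFoundedGT {M : Subgroup (G ⧸ A) // M.Normal}] :
    WellFoundedGT {N : Subgroup G // N.Normal} := by
  have := Subrepresentation.wellFoundedGT_of_isNoetherian A.conjRep
  have (N : {N : Subgroup G // N.Normal}) : N.1.Normal := N.2
  let f (N : {N : Subgroup G // N.Normal}) :
      Subrepresentation A.conjRep × {M : Subgroup (G ⧸ A) // M.Normal} :=
    (A.subrepOfNormal N,
      ⟨N.1.map (QuotientGroup.mk' A), N.2.map _ (QuotientGroup.mk'_surjective A)⟩)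
  refine StrictMono.wellFoundedGT (f := f) fun N₁ N₂ hlt => ?_
  refine lt_of_le_of_ne ⟨A.subrepOfNormal_mono hlt.le, map_mono hlt.le⟩ fun heq => hlt.ne ?_
  have hsup : N₁.1 ⊔ A = N₂.1 ⊔ A := by
    simpa [f, comap_map_eq] using
      congrArg (fun M => M.1.comap (QuotientGroup.mk' A)) (congrArg Prod.snd heq)
  exact Subtype.ext <| eq_of_le_of_inf_le_of_sup_le hlt.le
    (A.inf_le_inf_of_subrepOfNormal_le (congrArg Prod.fst heq).ge) hsup.ge

end

end Subgroup

/-- A finitely generated metabelian group satisfies the maximal condition on normal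
subgroups: every nonempty family of normal subgroups has a maximal element. -/
theorem stmt11 {G : Type*} [Group G] (hfg : Group.FG G)
    (hmeta : IsMulCommutative (commutator G))
    (S : Set (Subgroup G)) (hS : ∀ N ∈ S, N.Normal) (hne : S.Nonempty) :
    ∃ M ∈ S, ∀ N ∈ S, M ≤ N → N = M := by
  have : IsMulCommutative (G ⧸ commutator G) :=
    Normal.quotient_commutative_iff_commutator_le.2 le_rfl
  have : Group.FG (G ⧸ commutator G) := Group.fg_of_surjective (QuotientGroup.mk'_surjective _)
  have : IsNoetherianRing ℤ[G ⧸ commutator G] := Algebra.FiniteType.isNoetherianRing ℤ _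
  obtain ⟨T, hT⟩ := hfg.out
  have : Module.Finite ℤ[G ⧸ commutator G] (commutator G).conjRep.asModule :=
    finite_asModule_conjRep _ (T.finite_toSet.image2 _ T.finite_toSet)
      (Set.image2_subset_iff.2 fun a _ b _ => commutator_mem_commutator (mem_top a) (mem_top b))
      (commutator_le_normalClosure_image2 hT)
  have := wellFoundedGT_of_fg (G ⧸ commutator G)
  have := wellFoundedGT_normal_of_isNoetherian_conjRep (commutator G)
  obtain ⟨M, hMS, hmax⟩ := wellFounded_gt.has_min {N : {N : Subgroup G // N.Normal} | N.1 ∈ S}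
    ⟨⟨_, hS _ hne.some_mem⟩, hne.some_mem⟩
  exact ⟨M.1, hMS, fun N hN hMN =>
    congrArg Subtype.val (eq_of_le_of_not_lt (b := ⟨N, hS N hN⟩) hMN (hmax _ hN)).symm⟩
end

section
/- Let P be a group with a normal subgroup Z isomorphic to the additive group of π-local integers Z_π (or more generally a π-local abelian group) such that P/Z is a finite group whose order is a π-number. If P has unique q-th roots for primes q ∉ π, then P is π-local (x ↦ x^q is bijective for all q ∉ π). -/
/-!
Let `q ∉ π` and `y ∈ P`. The order `m` of `yZ` divides `|P/Z|`, so it is coprime to `q`; write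
`aq + bm = 1`. Since `y^m ∈ Z`, the element `y^(bm)` has a `q`-th root `z` in `Z`. Conjugation by
`y^a` fixes `z^q = y^(bm)`, hence fixes `z` by uniqueness of `q`-th roots in `P`, and then
`(y^a z)^q = y^(aq) y^(bm) = y`.
-/

theorem Commute.of_commute_pow_of_injective_pow {G : Type*} [Group G] {n : ℕ}
    (hinj : Function.Injective (fun x : G => x ^ n)) {g x : G} (h : Commute g (x ^ n)) :
    Commute g x := by
  have hfix : g * x * g⁻¹ = x := hinj <| by
    simp only [conj_pow, h.eq, mul_inv_cancel_right]
  exact mul_inv_eq_iff_eq_mul.mp hfix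

theorem exists_pow_eq_of_coprime_of_mem_zpowers {G : Type*} [Group G] {q m : ℕ}
    (hinj : Function.Injective (fun x : G => x ^ q)) (hcop : q.Coprime m) (y : G)
    (hroot : ∀ w ∈ Subgroup.zpowers (y ^ m), ∃ z : G, z ^ q = w) :
    ∃ x : G, x ^ q = y := by
  obtain ⟨a, b, hab⟩ := Nat.isCoprime_iff_coprime.mpr hcop
  obtain ⟨z, hz⟩ := hroot (y ^ (b * m)) <| by
    rw [mul_comm, zpow_mul, zpow_natCast]
    exact Subgroup.zpow_mem_zpowers _ _
  have hcomm : Commute (y ^ a) z :=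
    .of_commute_pow_of_injective_pow hinj (hz ▸ Commute.zpow_zpow_self y a _)
  refine ⟨y ^ a * z, ?_⟩
  rw [hcomm.mul_pow, hz, ← zpow_natCast, ← zpow_mul, ← zpow_add, hab, zpow_one]

theorem stmt13_general {P : Type*} [Group P] (π : Set ℕ) (Z : Subgroup P) [Z.Normal]
    (hZloc : ∀ q : ℕ, q.Prime → q ∉ π → Function.Bijective (fun z : Z => z ^ q))
    (hord : ∀ p : ℕ, p.Prime → p ∣ Nat.card (P ⧸ Z) → p ∈ π)
    (hU : ∀ q : ℕ, q.Prime → q ∉ π → Function.Injective (fun x : P => x ^ q)) :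
    ∀ q : ℕ, q.Prime → q ∉ π → Function.Bijective (fun x : P => x ^ q) := by
  intro q hq hqπ
  refine ⟨hU q hq hqπ, fun y => ?_⟩
  have hcop : q.Coprime (orderOf (y : P ⧸ Z)) :=
    (Nat.Prime.coprime_iff_not_dvd hq).mpr fun hdvd =>
      hqπ (hord q hq (hdvd.trans (orderOf_dvd_natCard _)))
  have hmem : y ^ orderOf (y : P ⧸ Z) ∈ Z := by
    rw [← QuotientGroup.eq_one_iff, QuotientGroup.mk_pow, pow_orderOf_eq_one]
  refine exists_pow_eq_of_coprime_of_mem_zpowers (hU q hq hqπ) hcop y fun w hw => ?_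
  obtain ⟨z, hz⟩ := (hZloc q hq hqπ).2 ⟨w, (Subgroup.zpowers_le.mpr hmem) hw⟩
  exact ⟨z, congrArg Subtype.val hz⟩

/-- Let `P` be a `U_π`-group with an abelian `π`-local normal subgroup `Z` such that
`P/Z` is a finite group of `π`-order. Then `P` is `π`-local. -/
theorem stmt13 {P : Type*} [Group P] (π : Set ℕ) (Z : Subgroup P) [Z.Normal]
    (hZab : IsMulCommutative Z)
    (hZloc : ∀ q : ℕ, q.Prime → q ∉ π → Function.Bijective (fun z : Z => z ^ q))
    (hfin : Finite (P ⧸ Z))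
    (hord : ∀ p : ℕ, p.Prime → p ∣ Nat.card (P ⧸ Z) → p ∈ π)
    (hU : ∀ q : ℕ, q.Prime → q ∉ π → Function.Injective (fun x : P => x ^ q)) :
    ∀ q : ℕ, q.Prime → q ∉ π → Function.Bijective (fun x : P => x ^ q) :=
  stmt13_general π Z hZloc hord hU
end

section
/- Let G be a group with a nilpotent normal subgroup N of finite index whose index is a π-number, and suppose G is a U_π-group. If N is π-local, then G is π-local. Consequently, in a virtually nilpotent U_π-group whose Fitting subgroup has finite π-index and is π-local, every element has q-th roots for all q ∉ π. -/
/-! Let `q ∉ π` and `n = [G : N]`, so `q` and `n` are coprime, say `a q + b n = 1`. Since `g ^ n ∈ N`,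
the element `g ^ (b n)` has a `q`-th root `z` in `N`. Uniqueness of `q`-th roots in the normal
subgroup `N` forces `z` to commute with `g`, because `g z g⁻¹` is another root of the same element.
Hence `(g ^ a z) ^ q = g ^ (a q + b n) = g`, and injectivity on `G` is the `U_π` hypothesis. -/

namespace Subgroup

variable {G : Type*} [Group G] {N : Subgroup G} [N.Normal]

theorem commute_of_commute_pow {n : ℕ} (hN : Function.Injective (fun x : N => x ^ n))
    {g z : G} (hz : z ∈ N) (h : Commute g (z ^ n)) : Commute g z := by
  have hconj : g * z * g⁻¹ ∈ N := Normal.conj_mem inferInstance z hz g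
  have hroot : (⟨g * z * g⁻¹, hconj⟩ : N) = ⟨z, hz⟩ := by
    refine hN (Subtype.ext ?_)
    simp only [SubgroupClass.coe_pow, conj_pow, h.eq, mul_inv_cancel_right]
  exact mul_inv_eq_iff_eq_mul.mp (congrArg Subtype.val hroot)

theorem exists_pow_eq_of_coprime_index {q : ℕ} (hq : q.Coprime N.index)
    (hN : Function.Bijective (fun x : N => x ^ q)) (g : G) : ∃ x : G, x ^ q = g := by
  obtain ⟨a, b, hab⟩ : ∃ a b : ℤ, a * q + N.index * b = 1 :=
    ⟨Nat.gcdA q N.index, Nat.gcdB q N.index, by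
      rw [mul_comm _ (q : ℤ), ← Nat.gcd_eq_gcd_ab, hq, Nat.cast_one]⟩
  have hmem : g ^ ((N.index : ℤ) * b) ∈ N := by
    rw [zpow_mul, zpow_natCast]
    exact N.zpow_mem (N.pow_index_mem g) b
  obtain ⟨z, hz⟩ := hN.2 ⟨_, hmem⟩
  have hzq : (z : G) ^ q = g ^ ((N.index : ℤ) * b) := congrArg Subtype.val hz
  have hcomm : Commute g z :=
    commute_of_commute_pow hN.1 z.2 (hzq ▸ Commute.self_zpow g _)
  refine ⟨g ^ a * z, ?_⟩
  rw [(hcomm.zpow_left a).mul_pow, hzq, ← zpow_natCast, ← zpow_mul, ← zpow_add, hab,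
    zpow_one]

end Subgroup

theorem stmt14_general {G : Type*} [Group G] (π : Set ℕ)
    (hU : ∀ q : ℕ, q.Prime → q ∉ π → Function.Injective (fun x : G => x ^ q))
    (N : Subgroup G) [N.Normal]
    (hidxπ : ∀ p : ℕ, p.Prime → p ∣ N.index → p ∈ π)
    (hNloc : ∀ q : ℕ, q.Prime → q ∉ π → Function.Bijective (fun x : N => x ^ q)) :
    ∀ q : ℕ, q.Prime → q ∉ π → Function.Bijective (fun x : G => x ^ q) := by
  intro q hq hqπ
  have hcop : q.Coprime N.index := hq.coprime_iff_not_dvd.2 fun h => hqπ (hidxπ q hq h)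
  exact ⟨hU q hq hqπ, N.exists_pow_eq_of_coprime_index hcop (hNloc q hq hqπ)⟩

/-- Let `G` be a `U_π`-group with a nilpotent normal subgroup `N` of finite index
which is a `π`-number, and suppose `N` is `π`-local. Then `G` is `π`-local: the
`q`-th power map is bijective on `G` for all primes `q ∉ π`. -/
theorem stmt14 {G : Type*} [Group G] (π : Set ℕ)
    (hU : ∀ q : ℕ, q.Prime → q ∉ π → Function.Injective (fun x : G => x ^ q))
    (N : Subgroup G) [N.Normal] (hnil : Group.IsNilpotent N)
    (hidx : N.FiniteIndex) (hidxπ : ∀ p : ℕ, p.Prime → p ∣ N.index → p ∈ π)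
    (hNloc : ∀ q : ℕ, q.Prime → q ∉ π → Function.Bijective (fun x : N => x ^ q)) :
    ∀ q : ℕ, q.Prime → q ∉ π → Function.Bijective (fun x : G => x ^ q) :=
  stmt14_general π hU N hidxπ hNloc
end

section
/- Let K be a group with normal subgroups B_1 ⊇ B_2 ⊇ ... arising as B_i = γ_i(K) ∩ N₁ for a normal subgroup N₁ of K, where K/Z is nilpotent of class c for a central-type subgroup Z with Z(K) = 1. If [B_t, B_s] = 1 whenever t + s = 2c + 1 (t, s ≥ 1), then [N₁′, K, ..., K] = 1 with m = 2c − 1 copies of K, i.e. [N₁′,_m K] ≤ ∏_{t+s=m+2, t,s≥1} [B_t, B_s] = 1; and since Z(K) = 1 this forces N₁′ = 1, i.e. N₁ is abelian. -/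
/-- Iterated commutator `[X,_m K]`: `[X,_0 K] = X`, `[X,_{n+1} K] = [[X,_n K], K]`. -/
def iterComm {K : Type*} [Group K] (X : Subgroup K) : ℕ → Subgroup K
  | 0 => X
  | n + 1 => ⁅iterComm X n, (⊤ : Subgroup K)⁆

/-! All the products `[B_t, B_s]` with `t + s = m + 2 = 2c + 1` vanish, so `[N₁′,_m K] = 1`.
In a centreless group `[X, K] = 1` forces `X ≤ Z(K) = 1`, and descending `m` times gives
`N₁′ = 1`. -/

namespace Subgroup

variable {K : Type*} [Group K]

theorem eq_bot_of_commutator_top_eq_bot (hZK : center K = ⊥) {X : Subgroup K}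
    (h : ⁅X, (⊤ : Subgroup K)⁆ = ⊥) : X = ⊥ := by
  rw [commutator_eq_bot_iff_le_centralizer, coe_top, centralizer_univ, hZK] at h
  exact le_bot_iff.mp h

theorem eq_bot_of_iterComm_eq_bot (hZK : center K = ⊥) {X : Subgroup K} :
    ∀ {m : ℕ}, iterComm X m = ⊥ → X = ⊥
  | 0, h => h
  | _ + 1, h => eq_bot_of_iterComm_eq_bot hZK (eq_bot_of_commutator_top_eq_bot hZK h)

end Subgroup

theorem stmt16_general {K : Type*} [Group K] (N₁ : Subgroup K)
    (c : ℕ) (hc : 1 ≤ c) (m : ℕ) (hm : m = 2 * c - 1)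
    (B : ℕ → Subgroup K)
    (hcont : iterComm ⁅N₁, N₁⁆ m ≤
      ⨆ (t : ℕ) (s : ℕ) (_ : t + s = m + 2) (_ : 1 ≤ t) (_ : 1 ≤ s), ⁅B t, B s⁆)
    (hBtriv : ∀ t s : ℕ, 1 ≤ t → 1 ≤ s → t + s = 2 * c + 1 → ⁅B t, B s⁆ = ⊥)
    (hZK : Subgroup.center K = ⊥) :
    ⁅N₁, N₁⁆ = ⊥ := by
  have hsup : (⨆ (t : ℕ) (s : ℕ) (_ : t + s = m + 2) (_ : 1 ≤ t) (_ : 1 ≤ s),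
      ⁅B t, B s⁆) = ⊥ := by
    simp only [iSup_eq_bot]
    intro t s hts ht hs
    exact hBtriv t s ht hs (by omega)
  exact Subgroup.eq_bot_of_iterComm_eq_bot hZK (le_bot_iff.mp (hsup ▸ hcont))

/-- With `B_i = γ_i(K) ∩ N₁`, if `[N₁',_m K] ≤ ∏_{t+s=m+2, t,s ≥ 1} [B_t, B_s]`
for `m = 2c - 1`, `[B_t, B_s] = 1` whenever `t + s = 2c + 1` (`t, s ≥ 1`), and
`Z(K) = 1`, then `N₁' = 1`, i.e. `N₁` is abelian. -/
theorem stmt16 {K : Type*} [Group K] (N₁ : Subgroup K) [N₁.Normal]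
    (c : ℕ) (hc : 1 ≤ c) (m : ℕ) (hm : m = 2 * c - 1)
    (B : ℕ → Subgroup K) (hB : ∀ i, B i = (⊤ : Subgroup K).lowerCentralSeries (i - 1) ⊓ N₁)
    (hcont : iterComm ⁅N₁, N₁⁆ m ≤
      ⨆ (t : ℕ) (s : ℕ) (_ : t + s = m + 2) (_ : 1 ≤ t) (_ : 1 ≤ s), ⁅B t, B s⁆)
    (hBtriv : ∀ t s : ℕ, 1 ≤ t → 1 ≤ s → t + s = 2 * c + 1 → ⁅B t, B s⁆ = ⊥)
    (hZK : Subgroup.center K = ⊥) :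
    ⁅N₁, N₁⁆ = ⊥ :=
  stmt16_general N₁ c hc m hm B hcont hBtriv hZK
end
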